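/- arXiv:1405.3471 — 2 statements merged into one kernel-verified Lean document; each statement's English description precedes it below -/
import Mathlib

section
/- The set of Diophantine vectors with fixed exponent τ > n and varying constant C > 0, i.e. vectors ω ∈ ℝⁿ such that there exists C > 0 with |⟨ω, i⟩| ≥ C/‖i‖^τ for all nonzero i ∈ ℤⁿ, has full Lebesgue measure in ℝⁿ when τ > n. -/
/-!
For `C > 0`, a non-Diophantine `ω` in the ball of radius `R` lies in one of the slabs
`|⟪ω, i⟫| ≤ C / ‖i‖^τ`, `i ∈ ℤⁿ \ {0}`. Such a slab has width `2C / ‖i‖^(τ+1)` and meets the ball in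
a set of measure `≤ C · c_R · ‖i‖^(-(τ+1))`, and `∑ ‖i‖^(-(τ+1))` converges because `τ + 1 > n`.
Hence the non-Diophantine vectors in the ball have measure `O(C)` for every `C > 0`, so measure zero.
-/

open MeasureTheory

theorem Matrix.det_updateRow_one {ι R : Type*} [Fintype ι] [DecidableEq ι] [CommRing R]
    (j : ι) (v : ι → R) : (updateRow (1 : Matrix ι ι R) j v).det = v j := by
  have hv : ∑ k, v k • (1 : Matrix ι ι R) k = v := by
    ext c
    simp [one_apply, Finset.sum_apply]
  simpa [hv] using det_updateRow_sum (1 : Matrix ι ι R) j v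

theorem volume_pi_update_Icc {ι : Type*} [Fintype ι] [DecidableEq ι] (j : ι) (R ε : ℝ) :
    volume (Set.univ.pi (Function.update (fun _ : ι => Set.Icc (-R) R) j (Set.Icc (-ε) ε))) =
      ENNReal.ofReal (2 * ε) * ENNReal.ofReal (2 * R) ^ (Fintype.card ι - 1) := by
  simp [volume_pi_pi, Function.update_apply, apply_ite, Finset.prod_ite, Real.volume_Icc, two_mul,
    Finset.filter_ne', Finset.filter_eq', Finset.card_erase_of_mem]

theorem exists_abs_eq_pi_norm {ι : Type*} [Fintype ι] [Nonempty ι] (v : ι → ℝ) :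
    ∃ j, ‖v‖ = |v j| := by
  obtain ⟨j, hj⟩ := Finite.exists_max fun j => |v j|
  exact ⟨j, le_antisymm ((pi_norm_le_iff_of_nonneg (abs_nonneg _)).2 hj) (norm_le_pi_norm v j)⟩

/-- `ℤ^ι` is a lattice of rank `card ι` in `ℝ^ι`, so this is `ZLattice.summable_norm_rpow`. -/
theorem summable_norm_intCast_rpow {ι : Type*} [Fintype ι] {r : ℝ} (hr : r < -Fintype.card ι) :
    Summable fun i : ι → ℤ => ‖fun j => (i j : ℝ)‖ ^ r := by
  classical
  let L := Submodule.span ℤ (Set.range (Pi.basisFun ℝ ι))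
  have hrank : Module.finrank ℤ L = Fintype.card ι := by
    rw [ZLattice.rank ℝ L, Module.finrank_fintype_fun_eq_card]
  let e : (ι → ℤ) ≃ L := ((Pi.basisFun ℝ ι).restrictScalars ℤ).equivFun.symm.toEquiv
  have he (i : ι → ℤ) : ((e i : L) : ι → ℝ) = fun j => (i j : ℝ) := by
    ext j
    simp [e, Pi.basisFun_apply, Pi.single_apply]
  simpa [Function.comp_def, he] using
    (ZLattice.summable_norm_rpow L r (by rwa [hrank])).comp_injective e.injective

/-- The slab `|ω ⬝ᵥ v| ≤ ε` has width `2ε / |v j|` in the direction of the coordinate `j`; we take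
the coordinate realizing the sup norm and straighten the slab by the linear map replacing `ω j`
with `ω ⬝ᵥ v`, of determinant `v j`. -/
theorem volume_closedBall_inter_abs_dotProduct_le {ι : Type*} [Fintype ι] {v : ι → ℝ}
    (hv : v ≠ 0) (R ε : ℝ) :
    volume ({ω : ι → ℝ | |ω ⬝ᵥ v| ≤ ε} ∩ Metric.closedBall 0 R) ≤
      ENNReal.ofReal (2 * ε / ‖v‖) * ENNReal.ofReal (2 * R) ^ (Fintype.card ι - 1) := by
  classical
  obtain ⟨j₀, -⟩ := Function.ne_iff.1 hv
  have : Nonempty ι := ⟨j₀⟩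
  obtain ⟨j, hj⟩ := exists_abs_eq_pi_norm v
  have hvj : v j ≠ 0 := by
    rw [← abs_pos, ← hj]
    exact norm_pos_iff.2 hv
  let A := Matrix.toLin' (Matrix.updateRow 1 j v)
  have hA (ω : ι → ℝ) : A ω = Function.update ω j (ω ⬝ᵥ v) := by
    simp [A, Matrix.updateRow_mulVec, dotProduct_comm]
  have hdet : LinearMap.det A = v j := by
    rw [LinearMap.det_toLin', Matrix.det_updateRow_one]
  let B := Function.update (fun _ : ι => Set.Icc (-R) R) j (Set.Icc (-ε) ε)
  have hsub : ({ω : ι → ℝ | |ω ⬝ᵥ v| ≤ ε} ∩ Metric.closedBall 0 R) ⊆ A ⁻¹' Set.univ.pi B := by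
    rintro ω ⟨hωv, hωR⟩ k -
    rw [hA]
    rcases eq_or_ne k j with rfl | hk
    · simpa [B] using abs_le.1 hωv
    · simpa [B, hk, ← abs_le, ← Real.norm_eq_abs] using
        (norm_le_pi_norm ω k).trans (mem_closedBall_zero_iff.1 hωR)
  calc volume ({ω : ι → ℝ | |ω ⬝ᵥ v| ≤ ε} ∩ Metric.closedBall 0 R)
      ≤ volume (A ⁻¹' Set.univ.pi B) := measure_mono hsub
    _ = ENNReal.ofReal |(LinearMap.det A)⁻¹| * volume (Set.univ.pi B) :=
        Measure.addHaar_preimage_linearMap volume (hdet ▸ hvj) _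
    _ = ENNReal.ofReal ‖v‖⁻¹ *
          (ENNReal.ofReal (2 * ε) * ENNReal.ofReal (2 * R) ^ (Fintype.card ι - 1)) := by
        rw [volume_pi_update_Icc, hdet, abs_inv, ← hj]
    _ = _ := by
        rw [← mul_assoc, ← ENNReal.ofReal_mul (by positivity), inv_mul_eq_div, mul_div_assoc]

theorem ENNReal.eq_zero_of_forall_le_ofReal_mul {a c : ENNReal} (hc : c ≠ ⊤)
    (h : ∀ C > (0 : ℝ), a ≤ ENNReal.ofReal C * c) : a = 0 := by
  have hlim :
      Filter.Tendsto (fun C => ENNReal.ofReal C * c) (nhds 0) (nhds (ENNReal.ofReal 0 * c)) :=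
    ENNReal.Tendsto.mul_const (ENNReal.tendsto_ofReal Filter.tendsto_id) (Or.inr hc)
  rw [ENNReal.ofReal_zero, zero_mul] at hlim
  have hpos : ∀ᶠ C in nhdsWithin 0 (Set.Ioi 0), a ≤ ENNReal.ofReal C * c :=
    eventually_nhdsWithin_of_forall h
  exact le_antisymm (ge_of_tendsto (hlim.mono_left nhdsWithin_le_nhds) hpos) zero_le

def IsDiophantine {ι : Type*} [Fintype ι] (τ : ℝ) (ω : ι → ℝ) : Prop :=
  ∃ C > (0 : ℝ), ∀ i : ι → ℤ, i ≠ 0 →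
    C / ‖fun j => (i j : ℝ)‖ ^ τ ≤ |ω ⬝ᵥ fun j => (i j : ℝ)|

section

variable {ι : Type*} [Fintype ι]

theorem setOf_not_isDiophantine_subset (τ : ℝ) {C : ℝ} (hC : 0 < C) :
    {ω : ι → ℝ | ¬IsDiophantine τ ω} ⊆ ⋃ i : {i : ι → ℤ // i ≠ 0},
      {ω | |ω ⬝ᵥ fun j => (i.1 j : ℝ)| ≤ C / ‖fun j => (i.1 j : ℝ)‖ ^ τ} := by
  intro ω hω
  simp only [IsDiophantine, not_exists, not_and, not_forall, not_le] at hω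
  obtain ⟨i, hi, hlt⟩ := hω C hC
  exact Set.mem_iUnion.2 ⟨⟨i, hi⟩, hlt.le⟩

theorem volume_abs_dotProduct_le_div_norm_rpow_inter_closedBall_le {i : ι → ℤ} (hi : i ≠ 0)
    (τ R : ℝ) {C : ℝ} (hC : 0 ≤ C) :
    volume ({ω : ι → ℝ | |ω ⬝ᵥ fun j => (i j : ℝ)| ≤ C / ‖fun j => (i j : ℝ)‖ ^ τ} ∩
        Metric.closedBall 0 R) ≤
      ENNReal.ofReal C * (2 * ENNReal.ofReal (2 * R) ^ (Fintype.card ι - 1) *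
        ENNReal.ofReal (‖fun j => (i j : ℝ)‖ ^ (-(τ + 1)))) := by
  have hi' : (fun j => (i j : ℝ)) ≠ 0 := fun h => hi (funext fun j => by simpa using congrFun h j)
  have hN : 0 < ‖fun j => (i j : ℝ)‖ := norm_pos_iff.2 hi'
  have heq : 2 * (C / ‖fun j => (i j : ℝ)‖ ^ τ) / ‖fun j => (i j : ℝ)‖ =
      C * (2 * ‖fun j => (i j : ℝ)‖ ^ (-(τ + 1))) := by
    rw [Real.rpow_neg hN.le, Real.rpow_add_one hN.ne']
    field_simp
  refine (volume_closedBall_inter_abs_dotProduct_le hi' R _).trans_eq ?_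
  rw [heq, ENNReal.ofReal_mul hC, ENNReal.ofReal_mul zero_le_two, ENNReal.ofReal_ofNat]
  ring

theorem volume_setOf_not_isDiophantine_inter_closedBall_le (τ R : ℝ) {C : ℝ} (hC : 0 < C) :
    volume ({ω : ι → ℝ | ¬IsDiophantine τ ω} ∩ Metric.closedBall 0 R) ≤
      ENNReal.ofReal C * (2 * ENNReal.ofReal (2 * R) ^ (Fintype.card ι - 1) *
        ∑' i : {i : ι → ℤ // i ≠ 0}, ENNReal.ofReal (‖fun j => (i.1 j : ℝ)‖ ^ (-(τ + 1)))) := by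
  calc volume ({ω : ι → ℝ | ¬IsDiophantine τ ω} ∩ Metric.closedBall 0 R)
      ≤ volume (⋃ i : {i : ι → ℤ // i ≠ 0},
          {ω : ι → ℝ | |ω ⬝ᵥ fun j => (i.1 j : ℝ)| ≤ C / ‖fun j => (i.1 j : ℝ)‖ ^ τ} ∩
            Metric.closedBall 0 R) := by
        rw [← Set.iUnion_inter]
        exact measure_mono (Set.inter_subset_inter_left _ (setOf_not_isDiophantine_subset τ hC))
    _ ≤ _ := measure_iUnion_le _
    _ ≤ _ := ENNReal.tsum_le_tsum fun i =>
        volume_abs_dotProduct_le_div_norm_rpow_inter_closedBall_le i.2 τ R hC.le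
    _ = _ := by rw [ENNReal.tsum_mul_left, ENNReal.tsum_mul_left]

theorem volume_setOf_not_isDiophantine {τ : ℝ} (hτ : Fintype.card ι < τ) :
    volume {ω : ι → ℝ | ¬IsDiophantine τ ω} = 0 := by
  have hsum : ∑' i : {i : ι → ℤ // i ≠ 0},
      ENNReal.ofReal (‖fun j => (i.1 j : ℝ)‖ ^ (-(τ + 1))) ≠ ⊤ := by
    have hs := (summable_norm_intCast_rpow (ι := ι) (r := -(τ + 1)) (by linarith)).subtype
      {i | i ≠ 0}
    refine ne_of_eq_of_ne (ENNReal.ofReal_tsum_of_nonneg ?_ hs).symm ENNReal.ofReal_ne_top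
    exact fun _ => Real.rpow_nonneg (norm_nonneg _) _
  rw [← Metric.iUnion_inter_closedBall_nat {ω : ι → ℝ | ¬IsDiophantine τ ω} 0]
  refine measure_iUnion_null fun R => ENNReal.eq_zero_of_forall_le_ofReal_mul ?_ fun C hC =>
    volume_setOf_not_isDiophantine_inter_closedBall_le τ R hC
  exact ENNReal.mul_ne_top (ENNReal.mul_ne_top ENNReal.ofNat_ne_top
    (ENNReal.pow_ne_top ENNReal.ofReal_ne_top)) hsum

end

/-- The set of vectors that are Diophantine with exponent `τ > n` (for some
constant `C > 0`) has full Lebesgue measure in `ℝⁿ`. -/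
theorem stmt_0 (n : ℕ) (τ : ℝ) (hτ : (n : ℝ) < τ) :
    volume {ω : Fin n → ℝ |
      ¬ ∃ C > (0 : ℝ), ∀ i : Fin n → ℤ, i ≠ 0 →
        C / ‖(fun j => (i j : ℝ))‖ ^ τ ≤ |∑ j, ω j * (i j : ℝ)|} = 0 :=
  volume_setOf_not_isDiophantine (by simpa using hτ)
end

section
/- There exists a non-resonant vector α ∈ ℝ² whose sequence σ(α)ₘ violates the Bruno condition, i.e. Σₘ 2^{−m} log(1/σ(α)ₘ) = ∞: it suffices to take α = (1, λ) for a suitable Liouville number λ whose rational approximations satisfy |λ − pₖ/qₖ| < qₖ^{−qₖ}. -/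
/-- `σ(α)ₘ = inf { |⟨α,i⟩| : i ∈ ℤ², 0 < ‖i‖ ≤ 2^m }` (sup norm on `ℤ²`). -/
noncomputable def sigmaSeq (α : Fin 2 → ℝ) (m : ℕ) : ℝ :=
  sInf {x : ℝ | ∃ i : Fin 2 → ℤ, i ≠ 0 ∧ ‖(fun j => (i j : ℝ))‖ ≤ 2 ^ m ∧
    x = |∑ j, α j * (i j : ℝ)|}

/-!
Let `λ = ∑ₖ 2^{-eₖ}` with `e₀ = 1` and `eₖ₊₁ = eₖ 2^{eₖ} + 2`. Truncating the series after its
`k`-th term gives `p/q` with `q = 2^{eₖ}`, `0 ≤ p ≤ q` and `0 < λ - p/q ≤ 2·2^{-eₖ₊₁} < q^{-q}`;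
in particular `λ` is a Liouville number. For any such approximation the lattice point `(-p, q)` has
size at most `2^m`, `m = ⌈log₂ q⌉`, so `σₘ ≤ |qλ - p| < q^{1-q}` and, as `2^m < 2q`,
`2^{-m} log(1/σₘ) > (q - 1) log q / 2q ≥ (log q)/4`. The terms of the Bruno series are therefore
unbounded.
-/

open Real Finset Filter

noncomputable def brunoTerm (α : Fin 2 → ℝ) (m : ℕ) : ℝ :=
  (2 : ℝ)⁻¹ ^ m * log (sigmaSeq α m)⁻¹

section sigmaSeq

variable (α : Fin 2 → ℝ) (m : ℕ)

lemma sigmaSeq_le {i : Fin 2 → ℤ} (hi : i ≠ 0) (him : ‖(fun j => (i j : ℝ))‖ ≤ 2 ^ m) :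
    sigmaSeq α m ≤ |∑ j, α j * (i j : ℝ)| :=
  csInf_le ⟨0, by rintro _ ⟨i, -, -, rfl⟩; exact abs_nonneg _⟩ ⟨i, hi, him, rfl⟩

lemma sigmaSeq_pos (hα : ∀ i : Fin 2 → ℤ, i ≠ 0 → ∑ j, α j * (i j : ℝ) ≠ 0) :
    0 < sigmaSeq α m := by
  set S := {x : ℝ | ∃ i : Fin 2 → ℤ, i ≠ 0 ∧ ‖(fun j => (i j : ℝ))‖ ≤ 2 ^ m ∧
    x = |∑ j, α j * (i j : ℝ)|}
  have hne : S.Nonempty := by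
    refine ⟨_, Pi.single 0 1, by simp, ?_, rfl⟩
    rw [pi_norm_le_iff_of_nonneg (by positivity), Fin.forall_fin_two]
    simpa using one_le_pow₀ one_le_two
  have hfin : S.Finite := by
    refine ((Set.Finite.pi fun _ => Set.finite_Icc (-(2 ^ m : ℤ)) (2 ^ m)).image
      (fun i => |∑ j, α j * (i j : ℝ)|)).subset ?_
    rintro _ ⟨i, -, hi, rfl⟩
    refine ⟨i, fun j _ => ?_, rfl⟩
    have := abs_le.1 <| (Real.norm_eq_abs _).symm.trans_le ((norm_le_pi_norm _ j).trans hi)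
    exact ⟨by exact_mod_cast this.1, by exact_mod_cast this.2⟩
  obtain ⟨i, hi, -, heq⟩ := hne.csInf_mem hfin
  change 0 < sInf S
  rw [heq]
  exact abs_pos.2 (hα i hi)

lemma sigmaSeq_one_le_abs_mul_sub (x : ℝ) {p : ℤ} {q : ℕ} (hq : 0 < q) (hp : |p| ≤ q)
    (hqm : q ≤ 2 ^ m) :
    sigmaSeq ![1, x] m ≤ |q * x - p| := by
  have hle := sigmaSeq_le ![1, x] m (i := ![-p, q]) (by simp [hq.ne']) ?_
  · simpa [Fin.sum_univ_two, neg_add_eq_sub, mul_comm] using hle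
  · rw [pi_norm_le_iff_of_nonneg (by positivity), Fin.forall_fin_two]
    refine ⟨?_, ?_⟩
    · simpa using (by exact_mod_cast hp.trans (by exact_mod_cast hqm) : |(p : ℝ)| ≤ 2 ^ m)
    · simpa using (by exact_mod_cast hqm : (q : ℝ) ≤ 2 ^ m)

end sigmaSeq

lemma Irrational.one_nonresonant {x : ℝ} (hx : Irrational x) :
    ∀ i : Fin 2 → ℤ, i ≠ 0 → ∑ j, ![1, x] j * (i j : ℝ) ≠ 0 := by
  intro i hi
  simp only [Fin.sum_univ_two, Matrix.cons_val_zero, Matrix.cons_val_one, one_mul]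
  by_cases h1 : i 1 = 0
  · have h0 : i 0 ≠ 0 := fun h0 => hi (funext (Fin.forall_fin_two.2 ⟨h0, h1⟩))
    simpa [h1] using h0
  · exact ((hx.mul_intCast h1).intCast_add (i 0)).ne_zero

lemma Nat.pow_clog_le_mul {b q : ℕ} (hb : 1 < b) (hq : 1 < q) : b ^ clog b q ≤ b * q := by
  rw [← Nat.succ_pred_eq_of_pos (clog_pos hb hq), pow_succ, mul_comm]
  exact Nat.mul_le_mul_left b (pow_pred_clog_lt_self hb hq).le

lemma log_div_four_le_brunoTerm_clog {x : ℝ} (hx : Irrational x) {p : ℤ} {q : ℕ} (hq : 2 ≤ q)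
    (hp : |p| ≤ q) (happrox : |x - p / q| < 1 / q ^ q) :
    log q / 4 ≤ brunoTerm ![1, x] (Nat.clog 2 q) := by
  set m := Nat.clog 2 q
  set σ := sigmaSeq ![1, x] m
  have hq0 : (0 : ℝ) < q := by positivity
  have hσ_pos : 0 < σ := sigmaSeq_pos _ m hx.one_nonresonant
  have hσ : σ < q / q ^ q := calc
    σ ≤ |q * x - p| := sigmaSeq_one_le_abs_mul_sub m x (by omega) hp (Nat.le_pow_clog one_lt_two q)
    _ = |q * (x - p / q)| := by rw [mul_sub, mul_div_cancel₀ _ hq0.ne']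
    _ = q * |x - p / q| := by rw [abs_mul, abs_of_pos hq0]
    _ < q * (1 / q ^ q) := mul_lt_mul_of_pos_left happrox hq0
    _ = q / q ^ q := by ring
  have hlog : (q - 1) * log q ≤ log σ⁻¹ := calc
    (q - 1) * log q = log (q ^ q / q) := by
      rw [log_div (by positivity) hq0.ne', log_pow]; ring
    _ ≤ log σ⁻¹ := log_le_log (by positivity) (inv_div (q : ℝ) _ ▸ inv_anti₀ hσ_pos hσ.le)
  have h2m : (2 : ℝ) ^ m ≤ 2 * q := by exact_mod_cast Nat.pow_clog_le_mul one_lt_two hq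
  have hlogq : 0 ≤ log q := log_nonneg (by exact_mod_cast (by omega : 1 ≤ q))
  have hq2 : (2 : ℝ) ≤ q := by exact_mod_cast hq
  calc log q / 4 ≤ (q - 1) * log q / (2 * q) := by
        rw [div_le_div_iff₀ (by norm_num) (by positivity)]; nlinarith
    _ ≤ (q - 1) * log q / 2 ^ m :=
        div_le_div_of_nonneg_left (by nlinarith) (by positivity) h2m
    _ ≤ brunoTerm ![1, x] m := by
        rw [brunoTerm, inv_pow, ← div_eq_inv_mul]
        exact div_le_div_of_nonneg_right hlog (by positivity)

-- `|p| ≤ q` puts `(-p, q)` in the box `‖i‖ ≤ 2^m` as soon as `q ≤ 2^m`.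
def SuperLiouville (x : ℝ) : Prop :=
  ∀ N : ℕ, ∃ (p : ℤ) (q : ℕ), N ≤ q ∧ |p| ≤ q ∧ 0 < |x - p / q| ∧ |x - p / q| < 1 / q ^ q

namespace SuperLiouville

variable {x : ℝ} (hx : SuperLiouville x)
include hx

lemma liouville : Liouville x := by
  intro n
  obtain ⟨p, q, hq, -, hpos, hlt⟩ := hx (n + 2)
  refine ⟨p, q, by exact_mod_cast (by omega : 1 < q), fun h => by simp [h] at hpos, ?_⟩
  have hq1 : (1 : ℝ) ≤ q := by exact_mod_cast (by omega : 1 ≤ q)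
  push_cast
  exact hlt.trans_le (one_div_le_one_div_of_le (by positivity) (pow_le_pow_right₀ hq1 (by omega)))

lemma not_summable_brunoTerm : ¬ Summable (brunoTerm ![1, x]) := by
  intro hs
  obtain ⟨C, hC⟩ := hs.tendsto_atTop_zero.bddAbove_range
  obtain ⟨N, hN⟩ := eventually_atTop.1 <|
    (tendsto_log_atTop.comp tendsto_natCast_atTop_atTop).eventually_gt_atTop (4 * C)
  obtain ⟨p, q, hq, hp, -, happrox⟩ := hx (N + 2)
  have hlogq : 4 * C < log q := hN q (by omega)
  have hterm := log_div_four_le_brunoTerm_clog hx.liouville.irrational (by omega) hp happrox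
  have hbdd : brunoTerm ![1, x] (Nat.clog 2 q) ≤ C := hC ⟨_, rfl⟩
  linarith

end SuperLiouville

section Dyadic

variable {e : ℕ → ℕ}

lemma summable_inv_two_pow_comp (he : StrictMono e) : Summable fun k => (2 : ℝ)⁻¹ ^ e k :=
  (summable_geometric_of_lt_one (by norm_num) (by norm_num)).of_nonneg_of_le
    (fun _ => by positivity) fun _ => pow_le_pow_of_le_one (by norm_num) (by norm_num) he.le_apply

lemma tsum_inv_two_pow_comp_sub_sum_range (he : StrictMono e) (n : ℕ) :
    ∑' k, (2 : ℝ)⁻¹ ^ e k - ∑ k ∈ range n, (2 : ℝ)⁻¹ ^ e k = ∑' k, (2 : ℝ)⁻¹ ^ e (k + n) := by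
  rw [← (summable_inv_two_pow_comp he).sum_add_tsum_nat_add n, add_sub_cancel_left]

lemma tsum_inv_two_pow_comp_sub_sum_range_pos (he : StrictMono e) (n : ℕ) :
    0 < ∑' k, (2 : ℝ)⁻¹ ^ e k - ∑ k ∈ range n, (2 : ℝ)⁻¹ ^ e k := by
  rw [tsum_inv_two_pow_comp_sub_sum_range he]
  exact ((summable_nat_add_iff n).2 (summable_inv_two_pow_comp he)).tsum_pos
    (fun _ => by positivity) 0 (by positivity)

lemma tsum_inv_two_pow_comp_sub_sum_range_le (he : StrictMono e) (n : ℕ) :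
    ∑' k, (2 : ℝ)⁻¹ ^ e k - ∑ k ∈ range n, (2 : ℝ)⁻¹ ^ e k ≤ 2 * 2⁻¹ ^ e n := by
  rw [tsum_inv_two_pow_comp_sub_sum_range he]
  calc ∑' k, (2 : ℝ)⁻¹ ^ e (k + n) ≤ ∑' k, (2 : ℝ)⁻¹ ^ e n * 2⁻¹ ^ k :=
        ((summable_nat_add_iff n).2 (summable_inv_two_pow_comp he)).tsum_le_tsum
          (fun k => pow_add (2 : ℝ)⁻¹ _ k ▸
            pow_le_pow_of_le_one (by norm_num) (by norm_num) (by linarith [he.add_le_nat k n]))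
          ((summable_geometric_of_lt_one (by norm_num) (by norm_num)).mul_left _)
    _ = 2 * 2⁻¹ ^ e n := by rw [tsum_mul_left, tsum_geometric_inv_two, mul_comm]

lemma sum_range_inv_two_pow_comp_le_one (he : StrictMono e) (he0 : 0 < e 0) (n : ℕ) :
    ∑ k ∈ range n, (2 : ℝ)⁻¹ ^ e k ≤ 1 := calc
  _ ≤ ∑' k, (2 : ℝ)⁻¹ ^ e k := by linarith [tsum_inv_two_pow_comp_sub_sum_range_pos he n]
  _ ≤ 2 * 2⁻¹ ^ e 0 := by simpa using tsum_inv_two_pow_comp_sub_sum_range_le he 0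
  _ ≤ 2 * 2⁻¹ ^ 1 := by gcongr 2 * ?_; exact pow_le_pow_of_le_one (by norm_num) (by norm_num) he0
  _ = 1 := by norm_num

lemma two_pow_mul_sum_range_inv_two_pow_comp (he : Monotone e) (n : ℕ) :
    (2 : ℝ) ^ e n * ∑ k ∈ range (n + 1), (2 : ℝ)⁻¹ ^ e k =
      ((∑ k ∈ range (n + 1), 2 ^ (e n - e k) : ℕ) : ℝ) := by
  push_cast
  rw [mul_sum]
  refine sum_congr rfl fun k hk => ?_
  rw [pow_sub₀ _ two_ne_zero (he (Nat.lt_succ_iff.1 (mem_range.1 hk))), inv_pow]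

end Dyadic

lemma superLiouville_tsum_inv_two_pow {e : ℕ → ℕ} (he : ∀ k, e k * 2 ^ e k + 2 ≤ e (k + 1))
    (he0 : 0 < e 0) : SuperLiouville (∑' k, (2 : ℝ)⁻¹ ^ e k) := by
  have hmono : StrictMono e := strictMono_nat_of_lt_succ fun k => by
    have := he k
    have := Nat.one_le_two_pow (n := e k)
    nlinarith
  intro N
  have hnum := two_pow_mul_sum_range_inv_two_pow_comp hmono.monotone N
  set p : ℕ := ∑ k ∈ range (N + 1), 2 ^ (e N - e k)
  have hpq : ((p : ℤ) : ℝ) / ((2 ^ e N : ℕ) : ℝ) = ∑ k ∈ range (N + 1), (2 : ℝ)⁻¹ ^ e k := by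
    rw [Int.cast_natCast, ← hnum, Nat.cast_pow, Nat.cast_ofNat,
      mul_div_cancel_left₀ _ (by positivity)]
  have hrem := tsum_inv_two_pow_comp_sub_sum_range_pos hmono (N + 1)
  refine ⟨p, 2 ^ e N, hmono.le_apply.trans Nat.lt_two_pow_self.le, ?_, ?_, ?_⟩
  · have : (p : ℝ) ≤ 2 ^ e N := by
      rw [← hnum]
      exact mul_le_of_le_one_right (by positivity) (sum_range_inv_two_pow_comp_le_one hmono he0 _)
    rw [abs_of_nonneg (by positivity)]
    exact_mod_cast this
  · rw [hpq]
    exact abs_pos.2 hrem.ne'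
  · rw [hpq, abs_of_pos hrem]
    calc _ ≤ 2 * 2⁻¹ ^ e (N + 1) := tsum_inv_two_pow_comp_sub_sum_range_le hmono (N + 1)
      _ ≤ 2 * 2⁻¹ ^ (e N * 2 ^ e N + 2) := by
        gcongr 2 * ?_
        exact pow_le_pow_of_le_one (by norm_num) (by norm_num) (he N)
      _ < 2⁻¹ ^ (e N * 2 ^ e N) := by
        have := pow_pos (inv_pos.2 (two_pos : (0 : ℝ) < 2)) (e N * 2 ^ e N)
        rw [pow_add]
        linarith
      _ = 1 / ((2 ^ e N : ℕ) : ℝ) ^ (2 ^ e N) := by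
        push_cast
        rw [← pow_mul, one_div, inv_pow]

def towerExp : ℕ → ℕ
  | 0 => 1
  | k + 1 => towerExp k * 2 ^ towerExp k + 2

lemma superLiouville_tsum_inv_two_pow_towerExp :
    SuperLiouville (∑' k, (2 : ℝ)⁻¹ ^ towerExp k) :=
  superLiouville_tsum_inv_two_pow (fun _ => le_rfl) one_pos

/-- There is a non-resonant vector `α = (1, λ) ∈ ℝ²`, with `λ` a Liouville
number, whose sequence `σ(α)` violates the Bruno condition. -/
theorem stmt_13 :
    ∃ l : ℝ, Liouville l ∧
      (∀ i : Fin 2 → ℤ, i ≠ 0 → ∑ j, (![1, l]) j * (i j : ℝ) ≠ 0) ∧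
      ¬ Summable (fun m : ℕ => (2 : ℝ)⁻¹ ^ m * Real.log (sigmaSeq ![1, l] m)⁻¹) := by
  have hx := superLiouville_tsum_inv_two_pow_towerExp
  exact ⟨_, hx.liouville, hx.liouville.irrational.one_nonresonant, hx.not_summable_brunoTerm⟩
end
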